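/- arXiv:1909.08107 — 5 statements merged into one kernel-verified Lean document; each statement's English description precedes it below -/
import Mathlib

section
/- Let n ≥ 1, let λ ∈ ℂ with λ ≠ 0, and let q, r : Fin n → ℂ satisfy q i − r j ≠ 0 for all i, j. Then the determinant of the n×n complex matrix with (i,j) entry (λ + q i − r j)/(λ·(q i − r j)) equals [(λ + ∑_i (q i − r i))/λ] · [∏_{i<j} (q i − q j)·(r j − r i)] / [∏_{i,j} (q i − r j)]. (The rational degeneration of the paper's elliptic Cauchy determinant identity, used in the cuspidal/rational case of the RS system.) -/
open Matrix Finset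

lemma prod_Ioi_split {M : Type*} [CommMonoid M] (m : ℕ) (f : Fin (m+1) → Fin (m+1) → M) :
    ∏ i, ∏ j ∈ Finset.Ioi i, f i j =
      (∏ i : Fin m, ∏ j ∈ Finset.Ioi i, f i.castSucc j.castSucc) *
        ∏ i : Fin m, f i.castSucc (Fin.last m) := by
  have key : ∀ (N : ℕ) (i : Fin N) (g : Fin N → M),
      ∏ j ∈ Finset.Ioi i, g j = ∏ j, if i < j then g j else 1 := by
    intro N i g
    rw [← Finset.prod_filter, Finset.filter_lt_eq_Ioi]
  simp_rw [key]
  rw [Fin.prod_univ_castSucc]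
  have hlast : (∏ j, if Fin.last m < j then f (Fin.last m) j else 1) = 1 := by
    apply Finset.prod_eq_one; intro j _
    simp [Fin.le_last j]
  rw [hlast, mul_one, ← Finset.prod_mul_distrib]
  apply Finset.prod_congr rfl
  intro i _
  rw [Fin.prod_univ_castSucc]
  rw [if_pos (Fin.castSucc_lt_last i)]
  simp [Fin.castSucc_lt_castSucc_iff]

lemma det_rowop {N : ℕ} (A : Matrix (Fin N) (Fin N) ℂ) (L : Fin N) (u : Fin N → ℂ)
    (hu : u L = 0) :
    (Matrix.of fun i j => A i j + u i * A L j).det = A.det := by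
  have hE : (Matrix.of fun i j => A i j + u i * A L j) =
      (1 + Matrix.replicateCol Unit u * Matrix.replicateRow Unit (Pi.single L (1:ℂ))) * A := by
    ext i j
    simp only [Matrix.add_mul, Matrix.mul_apply, Pi.single_apply, ite_mul, mul_ite,
      Matrix.one_apply, Matrix.of_apply, Matrix.add_apply, Matrix.replicateCol_apply, Matrix.replicateRow_apply,
      Finset.univ_unique, Finset.sum_const, Finset.sum_add_distrib, one_mul, zero_mul, mul_one,
      mul_zero, Finset.card_singleton, one_smul, smul_eq_mul, Finset.sum_ite_eq',
      Finset.sum_ite_eq, Finset.mem_univ, if_true]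
    rw [show (∑ x : Fin N, ((if i = x then 1 else 0) + if x = L then u i else 0) * A x j) =
        ∑ x : Fin N, ((if i = x then A x j else 0) + if x = L then u i * A x j else 0) from
      Finset.sum_congr rfl fun x _ => by split_ifs <;> ring]
    rw [Finset.sum_add_distrib, Finset.sum_ite_eq, Finset.sum_ite_eq']
    simp
  rw [hE, Matrix.det_mul, Matrix.det_one_add_replicateCol_mul_replicateRow]
  have hdot : Pi.single L (1:ℂ) ⬝ᵥ u = 0 := by
    simp [dotProduct, Pi.single_apply, Finset.sum_ite_eq', hu]
  rw [hdot, add_zero, one_mul]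

lemma det_colop {N : ℕ} (A : Matrix (Fin N) (Fin N) ℂ) (L : Fin N) (v : Fin N → ℂ)
    (hv : v L = 0) :
    (Matrix.of fun i j => A i j + A i L * v j).det = A.det := by
  have h := det_rowop A.transpose L v hv
  rw [← Matrix.det_transpose A, ← h,
    ← Matrix.det_transpose (Matrix.of fun i j => Aᵀ i j + v i * Aᵀ L j)]
  congr 1
  ext i j
  simp [Matrix.transpose_apply, mul_comm]

lemma cauchy_key : ∀ (n : ℕ) (c : ℂ) (q r : Fin n → ℂ), (∀ i j, q i - r j ≠ 0) →
    (Matrix.of fun i j => c + (q i - r j)⁻¹).det * ∏ i, ∏ j, (q i - r j) =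
      (1 + c * ∑ i, (q i - r i)) * ∏ i, ∏ j ∈ Finset.Ioi i, (q i - q j) * (r j - r i) := by
  intro n
  induction n with
  | zero => intro c q r _; simp
  | succ m IH =>
    intro c q r hqr
    set L : Fin (m+1) := Fin.last m with hL
    have hcs : ∀ i : Fin m, i.castSucc ≠ L := fun i => (Fin.castSucc_lt_last i).ne
    -- matrices
    set M0 : Matrix (Fin (m+1)) (Fin (m+1)) ℂ :=
      Matrix.of fun i j => c + (q i - r j)⁻¹ with hM0
    set M2 : Matrix (Fin (m+1)) (Fin (m+1)) ℂ :=
      Matrix.of fun i j => if j = L then 1 + c * (q i - r L)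
        else (r j - r L) * (q i - r j)⁻¹ with hM2
    set M4 : Matrix (Fin (m+1)) (Fin (m+1)) ℂ :=
      Matrix.of fun i j =>
        if i = L then (if j = L then 1 + c * (q L - r L) else (r j - r L) * (q L - r j)⁻¹)
        else if j = L then -c else (r j - r L) * ((q i - r j)⁻¹ * (q L - r j)⁻¹) with hM4
    set M5 : Matrix (Fin (m+1)) (Fin (m+1)) ℂ :=
      Matrix.of fun i j =>
        if i = L then (if j = L then 1 + c * (q L - r L) else 1)
        else if j = L then -c else (q i - r j)⁻¹ with hM5
    set d1 : Fin (m+1) → ℂ := fun i => (q i - r L)⁻¹ with hd1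
    set d2 : Fin (m+1) → ℂ := fun i => if i = L then 1 else q L - q i with hd2
    set d3 : Fin (m+1) → ℂ := fun j => if j = L then 1 else (r j - r L) * (q L - r j)⁻¹ with hd3
    -- step 1+2 : det M0 = det (diagonal d1 * M2)
    have step12 : M0.det = (Matrix.diagonal d1 * M2).det := by
      have h1 : (Matrix.of fun i j => M0 i j + M0 i L * (if j = L then 0 else (-1:ℂ))) =
          Matrix.diagonal d1 * M2 := by
        ext i j
        rw [Matrix.diagonal_mul]
        by_cases hj : j = L
        · subst hj
          simp only [hM0, hM2, hd1, Matrix.of_apply, if_pos rfl, ↓reduceIte, mul_zero, add_zero]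
          have h2 := hqr i L
          field_simp
          ring
        · simp only [hM0, hM2, hd1, Matrix.of_apply, if_neg hj]
          have h1 := hqr i j
          have h2 := hqr i L
          field_simp
          ring
      rw [← h1, det_colop]
      simp
    -- step 3+4 : det M2 = det (diagonal d2 * M4)
    have step34 : M2.det = (Matrix.diagonal d2 * M4).det := by
      have h1 : (Matrix.of fun i j => M2 i j + (if i = L then 0 else (-1:ℂ)) * M2 L j) =
          Matrix.diagonal d2 * M4 := by
        ext i j
        rw [Matrix.diagonal_mul]
        by_cases hi : i = L
        · simp [hM2, hM4, hd2, hi]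
        · by_cases hj : j = L
          · simp [hM2, hM4, hd2, hi, hj] <;> ring
          · simp only [hM2, hM4, hd2, Matrix.of_apply, if_neg hi, if_neg hj, neg_one_mul]
            have h1 := hqr i j
            have h2 := hqr L j
            field_simp
            ring
      rw [← h1, det_rowop]
      simp
    -- step 5 : M4 = M5 * diagonal d3
    have step5 : M4 = M5 * Matrix.diagonal d3 := by
      ext i j
      rw [Matrix.mul_diagonal]
      by_cases hj : j = L
      · subst hj; by_cases hi : i = L <;> simp [hM4, hM5, hd3, hi]
      · by_cases hi : i = L
        · subst hi; simp [hM4, hM5, hd3, hj]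
        · simp only [Matrix.of_apply, hM4, hM5, hd3, if_neg hi, if_neg hj]
          ring
    -- step 6 : det M5 split
    set C0 : Matrix (Fin m) (Fin m) ℂ :=
      Matrix.of fun i j => (q i.castSucc - r j.castSucc)⁻¹ with hC0
    set Cc : Matrix (Fin m) (Fin m) ℂ :=
      Matrix.of fun i j => c + (q i.castSucc - r j.castSucc)⁻¹ with hCc
    have step6 : M5.det = (M5.updateRow L (fun _ => (1:ℂ))).det + c * (q L - r L) * C0.det := by
      have hrow : M5 = M5.updateRow L ((fun _ => (1:ℂ)) + Pi.single L (c * (q L - r L))) := by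
        ext i j
        by_cases hi : i = L
        · subst hi
          rw [Matrix.updateRow_self]
          by_cases hj : j = L
          · subst hj; simp [hM5, Pi.single_apply]
          · simp [hM5, hj, Pi.single_apply]
        · rw [Matrix.updateRow_ne hi]
      nth_rewrite 1 [hrow]
      rw [Matrix.det_updateRow_add]
      congr 1
      -- second determinant
      rw [Matrix.det_succ_row _ L]
      rw [Finset.sum_eq_single L]
      · rw [Matrix.updateRow_self, Pi.single_eq_same]
        have hsub : (M5.updateRow L (Pi.single L (c * (q L - r L)))).submatrix
            L.succAbove L.succAbove = C0 := by
          ext i j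
          simp only [Matrix.submatrix_apply, hL, Fin.succAbove_last]
          rw [Matrix.updateRow_ne (hcs i)]
          simp [hM5, hcs i, hcs j, hC0]
        rw [hsub]
        have hpow : ((-1:ℂ)) ^ ((L:ℕ) + (L:ℕ)) = 1 := Even.neg_one_pow ⟨(L:ℕ), rfl⟩
        rw [hpow]
        ring
      · intro j _ hj
        rw [Matrix.updateRow_self]
        rw [Pi.single_eq_of_ne hj]
        ring
      · simp
    -- step 7+8 : det M6 = det Cc
    have step78 : (M5.updateRow L (fun _ => (1:ℂ))).det = Cc.det := by
      set M6 := M5.updateRow L (fun _ => (1:ℂ)) with hM6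
      have h1 : (Matrix.of fun i j => M6 i j + (if i = L then 0 else c) * M6 L j).det = M6.det :=
        det_rowop _ _ _ (by simp)
      rw [← h1]
      set M8 := Matrix.of fun i j => M6 i j + (if i = L then 0 else c) * M6 L j with hM8
      rw [Matrix.det_succ_column M8 L]
      rw [Finset.sum_eq_single L]
      · have hpow : ((-1:ℂ)) ^ ((L:ℕ) + (L:ℕ)) = 1 := Even.neg_one_pow ⟨(L:ℕ), rfl⟩
        have hLL : M8 L L = 1 := by
          simp [hM8, hM6, Matrix.updateRow_self]
        rw [hpow, hLL, one_mul, one_mul]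
        congr 1
        ext i j
        simp only [Matrix.submatrix_apply, hL, Fin.succAbove_last]
        simp only [hM8, Matrix.of_apply, hM6]
        rw [Matrix.updateRow_ne (hcs i), Matrix.updateRow_self]
        simp [hM5, hcs i, hcs j, hCc]
        ring
      · intro i _ hi
        have h0 : M8 i L = 0 := by
          simp [hM8, hM6, hi, Matrix.updateRow_ne hi, Matrix.updateRow_self, hM5]
        rw [h0]; ring
      · simp
    -- assemble determinant value
    have hdet : M0.det = (∏ i, d1 i) * ((∏ i, d2 i) *
        ((Cc.det + c * (q L - r L) * C0.det) * ∏ j, d3 j)) := by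
      rw [step12, Matrix.det_mul, Matrix.det_diagonal, step34, Matrix.det_mul,
        Matrix.det_diagonal, step5, Matrix.det_mul, Matrix.det_diagonal, step6, step78]
    -- product abbreviations
    set A1 : ℂ := ∏ i : Fin m, (q i.castSucc - r L) with hA1d
    set A2 : ℂ := ∏ i : Fin m, (q L - q i.castSucc) with hA2d
    set A3 : ℂ := ∏ i : Fin m, (r i.castSucc - r L) with hA3d
    set A4 : ℂ := ∏ i : Fin m, (q L - r i.castSucc) with hA4d
    set Q' : ℂ := ∏ i : Fin m, ∏ j : Fin m, (q i.castSucc - r j.castSucc) with hQ'd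
    set P' : ℂ := ∏ i : Fin m, ∏ j ∈ Finset.Ioi i,
      (q i.castSucc - q j.castSucc) * (r j.castSucc - r i.castSucc) with hP'd
    set S' : ℂ := ∑ i : Fin m, (q i.castSucc - r i.castSucc) with hS'd
    have hd1p : (∏ i, d1 i) = A1⁻¹ * (q L - r L)⁻¹ := by
      rw [Fin.prod_univ_castSucc, hA1d, ← Finset.prod_inv_distrib]
    have hd2p : (∏ i, d2 i) = A2 := by
      rw [Fin.prod_univ_castSucc]
      simp only [hd2, if_pos rfl, if_pos hL.symm, mul_one]
      exact Finset.prod_congr rfl fun i _ => by rw [if_neg (hcs i)]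
    have hd3p : (∏ j, d3 j) = A3 * A4⁻¹ := by
      rw [Fin.prod_univ_castSucc]
      simp only [hd3, if_pos rfl, if_pos hL.symm, mul_one]
      rw [show A3 * A4⁻¹ = ∏ i : Fin m, (r i.castSucc - r L) * (q L - r i.castSucc)⁻¹ by
        rw [Finset.prod_mul_distrib, ← Finset.prod_inv_distrib]]
      exact Finset.prod_congr rfl fun i _ => by rw [if_neg (hcs i)]
    have hQ : (∏ i, ∏ j, (q i - r j)) = Q' * A1 * (A4 * (q L - r L)) := by
      rw [Fin.prod_univ_castSucc (f := fun i => ∏ j, (q i - r j))]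
      simp_rw [Fin.prod_univ_castSucc (f := fun j => _ - r j)]
      rw [Finset.prod_mul_distrib]
    have hS : (∑ i, (q i - r i)) = S' + (q L - r L) := Fin.sum_univ_castSucc _
    have hP : (∏ i, ∏ j ∈ Finset.Ioi i, (q i - q j) * (r j - r i)) = P' * (A2 * A3) := by
      rw [prod_Ioi_split]
      congr 1
      rw [show A2 * A3 = ∏ i : Fin m, (q L - q i.castSucc) * (r i.castSucc - r L) from
        (Finset.prod_mul_distrib).symm]
      exact Finset.prod_congr rfl fun i _ => by ring
    have hIHc : Cc.det * Q' = (1 + c * S') * P' :=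
      IH c (fun i => q i.castSucc) (fun j => r j.castSucc) (fun i j => hqr _ _)
    have hIH0 : C0.det * Q' = P' := by
      have h := IH 0 (fun i => q i.castSucc) (fun j => r j.castSucc) (fun i j => hqr _ _)
      simpa using h
    have hA1 : A1 ≠ 0 := Finset.prod_ne_zero_iff.mpr fun i _ => hqr _ _
    have hA4 : A4 ≠ 0 := Finset.prod_ne_zero_iff.mpr fun i _ => hqr _ _
    have hQ' : Q' ≠ 0 :=
      Finset.prod_ne_zero_iff.mpr fun i _ => Finset.prod_ne_zero_iff.mpr fun j _ => hqr _ _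
    have hLL : q L - r L ≠ 0 := hqr L L
    have hCc' : Cc.det = (1 + c * S') * P' / Q' := by rw [eq_div_iff hQ']; exact hIHc
    have hC0' : C0.det = P' / Q' := by rw [eq_div_iff hQ']; exact hIH0
    rw [hdet, hQ, hS, hP, hd1p, hd2p, hd3p, hCc', hC0']
    field_simp
    ring


/-- **Rational Cauchy determinant identity** (the cuspidal/rational degeneration of
the elliptic Cauchy determinant identity used for the rational RS system).
For `n ≥ 1`, `λ ≠ 0`, and `q i − r j ≠ 0` for all `i, j`, the determinant of the matrix
with entries `(λ + q i − r j)/(λ·(q i − r j))` is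
`(λ + ∑ᵢ (qᵢ − rᵢ))/λ · ∏_{i<j} (qᵢ − qⱼ)(rⱼ − rᵢ) / ∏_{i,j} (qᵢ − rⱼ)`. -/
theorem rationalCauchy_det (n : ℕ) (hn : 1 ≤ n)
    (lam : ℂ) (hlam : lam ≠ 0)
    (q r : Fin n → ℂ) (hqr : ∀ i j, q i - r j ≠ 0) :
    (Matrix.of fun i j => (lam + q i - r j) / (lam * (q i - r j))).det =
      (lam + ∑ i, (q i - r i)) / lam *
        (∏ i, ∏ j ∈ Finset.Ioi i, (q i - q j) * (r j - r i)) /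
        ∏ i, ∏ j, (q i - r j) := by
  have hM : (Matrix.of fun i j => (lam + q i - r j) / (lam * (q i - r j))) =
      Matrix.of fun i j => lam⁻¹ + (q i - r j)⁻¹ := by
    ext i j
    have h := hqr i j
    simp only [Matrix.of_apply]
    field_simp
    ring
  have hkey := cauchy_key n lam⁻¹ q r hqr
  have hQ : (∏ i, ∏ j, (q i - r j)) ≠ 0 :=
    Finset.prod_ne_zero_iff.mpr fun i _ => Finset.prod_ne_zero_iff.mpr fun j _ => hqr _ _
  rw [hM]
  have hdet : (Matrix.of fun i j => lam⁻¹ + (q i - r j)⁻¹).det =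
      (1 + lam⁻¹ * ∑ i, (q i - r i)) *
        (∏ i, ∏ j ∈ Finset.Ioi i, (q i - q j) * (r j - r i)) / ∏ i, ∏ j, (q i - r j) := by
    rw [eq_div_iff hQ]; exact hkey
  rw [hdet]
  field_simp
end

section
/- For every z ∈ ℂ, the family (indexed by the nonzero lattice points w ∈ Λ \ {0}) of factors (1 − z/w)·exp(z/w + z²/(2w²)) is multipliable, and the function σ : ℂ → ℂ defined by σ(z) = z · ∏_{w ∈ Λ, w ≠ 0} (1 − z/w)·exp(z/w + z²/(2w²)) (the product interpreted as the tsum-style infinite product) is differentiable on all of ℂ, i.e. entire. -/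
open Complex

noncomputable section

/-- The lattice `Λ = ℤω₁ + ℤω₂ ⊆ ℂ`. -/
def lat (ω₁ ω₂ : ℂ) : Set ℂ := {z | ∃ m n : ℤ, z = (m : ℂ) * ω₁ + (n : ℂ) * ω₂}

/-- The Weierstrass sigma function of the lattice `Λ = ℤω₁ + ℤω₂`, defined by the
infinite product `σ(z) = z · ∏_{w ∈ Λ, w ≠ 0} (1 − z/w) · exp(z/w + z²/(2w²))`
(interpreted as a `tprod`). -/
def wsigma (ω₁ ω₂ : ℂ) (z : ℂ) : ℂ :=
  z * ∏' w : {w : ℂ // w ∈ lat ω₁ ω₂ ∧ w ≠ 0},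
    (1 - z / (w : ℂ)) * Complex.exp (z / (w : ℂ) + z ^ 2 / (2 * (w : ℂ) ^ 2))

private lemma lat_comm (ω₁ ω₂ : ℂ) : lat ω₁ ω₂ = lat ω₂ ω₁ := by
  ext w
  constructor <;> rintro ⟨m, n, rfl⟩ <;> exact ⟨n, m, by ring⟩

open EisensteinSeries UpperHalfPlane in
private lemma summable_aux {α β : ℂ} (h : 0 < (β / α).im) {ι' : Type*} (v : ι' → ℂ)
    (hv : ∀ i, v i ≠ 0) (hvinj : Function.Injective v)
    (hex : ∀ i, ∃ p : Fin 2 → ℤ, v i = (p 1 : ℂ) * α + (p 0 : ℂ) * β) :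
    Summable fun i : ι' => 1 / ‖v i‖ ^ 3 := by
  have hα : α ≠ 0 := by rintro rfl; simp at h
  set τ : ℍ := ⟨β / α, h⟩ with hτ
  choose e he using hex
  have heinj : Function.Injective e := by
    intro i j hij
    apply hvinj
    rw [he i, he j, hij]
  have hene : ∀ i, e i ≠ 0 := by
    intro i hi
    apply hv i
    rw [he i, hi]
    simp
  have hbound : ∀ i, ‖α‖ * (r τ * ‖e i‖) ≤ ‖v i‖ := by
    intro i
    have h1 := r_mul_max_le τ (hene i)
    have h2 : v i = α * ((e i 0 : ℂ) * (τ : ℂ) + (e i 1 : ℂ)) := by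
      rw [he i]
      have hc : (τ : ℂ) = β / α := rfl
      rw [hc]
      field_simp
      ring
    rw [h2, norm_mul]
    have hc2 : ‖(e i 0 : ℂ) * (τ : ℂ) + (e i 1 : ℂ)‖
        = ‖(e i 0 : ℂ) * (τ : ℂ) + (e i 1 : ℂ)‖ := rfl
    rw [hc2]
    exact mul_le_mul_of_nonneg_left h1 (norm_nonneg _)
  have hαpos : 0 < ‖α‖ := norm_pos_iff.mpr hα
  have hrpos : 0 < r τ := r_pos τ
  have hsum : Summable fun x : Fin 2 → ℤ =>
      (1 / (‖α‖ ^ 3 * r τ ^ 3)) * ‖x‖ ^ (-(3 : ℝ)) :=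
    (summable_one_div_norm_rpow (by norm_num)).mul_left _
  refine Summable.of_nonneg_of_le (fun i => by positivity) (fun i => ?_)
    (hsum.comp_injective heinj)
  have hepos : (0 : ℝ) < ‖e i‖ := norm_pos_iff.mpr (hene i)
  have hrw : ‖e i‖ ^ (-(3 : ℝ)) = (‖e i‖ ^ 3)⁻¹ := by
    rw [show (-(3 : ℝ)) = -((3 : ℕ) : ℝ) by norm_num, Real.rpow_neg (norm_nonneg _),
      Real.rpow_natCast]
  simp only [Function.comp_apply, hrw]
  have h3 : (‖α‖ * (r τ * ‖e i‖)) ^ 3 ≤ ‖v i‖ ^ 3 :=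
    pow_le_pow_left₀ (by positivity) (hbound i) 3
  have h4 : 1 / ‖v i‖ ^ 3 ≤ 1 / (‖α‖ * (r τ * ‖e i‖)) ^ 3 :=
    one_div_le_one_div_of_le (by positivity) h3
  refine h4.trans (le_of_eq ?_)
  field_simp

private lemma lat_summable {ω₁ ω₂ : ℂ} (hω : (ω₂ / ω₁).im ≠ 0) :
    Summable fun i : {w : ℂ // w ∈ lat ω₁ ω₂ ∧ w ≠ 0} => 1 / ‖(i : ℂ)‖ ^ 3 := by
  have hvinj : Function.Injective
      (fun i : {w : ℂ // w ∈ lat ω₁ ω₂ ∧ w ≠ 0} => (i : ℂ)) :=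
    Subtype.coe_injective
  have hv : ∀ i : {w : ℂ // w ∈ lat ω₁ ω₂ ∧ w ≠ 0}, (i : ℂ) ≠ 0 := fun i => i.2.2
  rcases hω.lt_or_gt with h | h
  · have hω₂ : ω₂ ≠ 0 := by rintro rfl; simp at h
    have hne : ω₂ / ω₁ ≠ 0 := by
      intro h0; rw [h0] at h; simp at h
    have h2 : 0 < (ω₁ / ω₂).im := by
      rw [show ω₁ / ω₂ = (ω₂ / ω₁)⁻¹ by rw [inv_div], Complex.inv_im]
      exact div_pos (by linarith) (Complex.normSq_pos.mpr hne)
    refine summable_aux h2 _ hv hvinj ?_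
    rintro ⟨w, ⟨m, n, rfl⟩, h0⟩
    exact ⟨![m, n], by simp; ring⟩
  · refine summable_aux h _ hv hvinj ?_
    rintro ⟨w, ⟨m, n, rfl⟩, h0⟩
    exact ⟨![n, m], by simp⟩

private lemma log_factor_bound {q : ℂ} (hq : ‖q‖ ≤ 1 / 2) :
    ‖Complex.log (1 - q) + (q + q ^ 2 / 2)‖ ≤ 2 / 3 * ‖q‖ ^ 3 := by
  have h1 : ‖(-q)‖ < 1 := by rw [norm_neg]; linarith
  have h2 := Complex.norm_log_sub_logTaylor_le 2 h1
  have h3 : logTaylor 3 (-q) = -q - q ^ 2 / 2 := by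
    simp [logTaylor_succ, logTaylor_zero]
    ring
  rw [h3, norm_neg] at h2
  have h4 : Complex.log (1 + -q) - (-q - q ^ 2 / 2) = Complex.log (1 - q) + (q + q ^ 2 / 2) := by
    rw [← sub_eq_add_neg]; ring
  rw [h4] at h2
  refine h2.trans ?_
  have h5 : (1 - ‖q‖)⁻¹ ≤ 2 := by
    rw [inv_le_comm₀ (by linarith) (by norm_num)]
    linarith
  have hx : (0 : ℝ) ≤ ‖q‖ ^ 3 := by positivity
  have h6 : ‖q‖ ^ (2 + 1) * (1 - ‖q‖)⁻¹ ≤ ‖q‖ ^ 3 * 2 := by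
    have he : ‖q‖ ^ (2 + 1) = ‖q‖ ^ 3 := by norm_num
    rw [he]
    exact mul_le_mul_of_nonneg_left h5 hx
  have h7 : ((2 : ℕ) : ℝ) + 1 = 3 := by norm_num
  rw [h7]
  linarith

private lemma wsigma_key (ω₁ ω₂ : ℂ) (hω : (ω₂ / ω₁).im ≠ 0) {R : ℝ} (hR : 0 < R) :
    ∃ F : ℂ → ℂ, DifferentiableOn ℂ F (Metric.ball 0 R) ∧
      ∀ z ∈ Metric.ball (0 : ℂ) R,
        HasProd (fun i : {w : ℂ // w ∈ lat ω₁ ω₂ ∧ w ≠ 0} =>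
          (1 - z / (i : ℂ)) * Complex.exp (z / (i : ℂ) + z ^ 2 / (2 * (i : ℂ) ^ 2))) (F z) := by
  classical
  set ι := {w : ℂ // w ∈ lat ω₁ ω₂ ∧ w ≠ 0}
  set f : ι → ℂ → ℂ := fun i z =>
    (1 - z / (i : ℂ)) * Complex.exp (z / (i : ℂ) + z ^ 2 / (2 * (i : ℂ) ^ 2)) with hf
  set g : ι → ℂ → ℂ := fun i z =>
    Complex.log (1 - z / (i : ℂ)) + (z / (i : ℂ) + z ^ 2 / (2 * (i : ℂ) ^ 2)) with hg
  have hsum := lat_summable hω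
  set S : Set ι := {i : ι | ‖(i : ℂ)‖ ≤ 2 * R} with hS
  -- S is finite
  have hSfin : S.Finite := by
    have ht : Filter.Tendsto (fun i : ι => 1 / ‖(i : ℂ)‖ ^ 3) Filter.cofinite (nhds 0) :=
      hsum.tendsto_cofinite_zero
    have hc : (0 : ℝ) < 1 / (2 * R + 1) ^ 3 := by
      have : (0 : ℝ) < 2 * R + 1 := by linarith
      positivity
    have hev : ∀ᶠ i : ι in Filter.cofinite, 1 / ‖(i : ℂ)‖ ^ 3 < 1 / (2 * R + 1) ^ 3 :=
      ht.eventually_lt_const hc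
    refine (Filter.eventually_cofinite.mp hev).subset ?_
    intro i hi
    simp only [Set.mem_setOf_eq, not_lt]
    have hipos : (0 : ℝ) < ‖(i : ℂ)‖ := norm_pos_iff.mpr i.2.2
    have : ‖(i : ℂ)‖ ^ 3 ≤ (2 * R + 1) ^ 3 := by
      apply pow_le_pow_left₀ hipos.le
      calc ‖(i : ℂ)‖ ≤ 2 * R := hi
        _ ≤ 2 * R + 1 := by linarith
    exact one_div_le_one_div_of_le (by positivity) this
  haveI : Fintype ↥S := hSfin.fintype
  -- basic estimates outside S
  have hq : ∀ (i : ι), i ∈ Sᶜ → ∀ z ∈ Metric.ball (0 : ℂ) R, ‖z / (i : ℂ)‖ ≤ 1 / 2 := by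
    intro i hi z hz
    have hiR : 2 * R < ‖(i : ℂ)‖ := by
      simpa [hS, not_le] using hi
    have hzR : ‖z‖ < R := by simpa using hz
    rw [norm_div]
    rw [div_le_iff₀ (by linarith)]
    calc ‖z‖ ≤ R := hzR.le
      _ = 1 / 2 * (2 * R) := by ring
      _ ≤ 1 / 2 * ‖(i : ℂ)‖ := by linarith
  have hne : ∀ (i : ι), i ∈ Sᶜ → ∀ z ∈ Metric.ball (0 : ℂ) R, 1 - z / (i : ℂ) ≠ 0 := by
    intro i hi z hz h0
    have := hq i hi z hz
    rw [sub_eq_zero] at h0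
    rw [← h0] at this
    norm_num at this
  have hfg : ∀ (i : ι), i ∈ Sᶜ → ∀ z ∈ Metric.ball (0 : ℂ) R,
      Complex.exp (g i z) = f i z := by
    intro i hi z hz
    rw [hg, hf, Complex.exp_add, Complex.exp_log (hne i hi z hz)]
  have hgbound : ∀ (i : ι), i ∈ Sᶜ → ∀ z ∈ Metric.ball (0 : ℂ) R,
      ‖g i z‖ ≤ 2 / 3 * R ^ 3 * (1 / ‖(i : ℂ)‖ ^ 3) := by
    intro i hi z hz
    have hq' := hq i hi z hz
    have h1 : z ^ 2 / (2 * (i : ℂ) ^ 2) = (z / (i : ℂ)) ^ 2 / 2 := by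
      field_simp
    have h2 : ‖g i z‖ ≤ 2 / 3 * ‖z / (i : ℂ)‖ ^ 3 := by
      have hb := log_factor_bound hq'
      simp only [hg]
      rw [h1]
      exact hb
    refine h2.trans ?_
    have hzR : ‖z‖ ≤ R := by
      have : ‖z‖ < R := by simpa using hz
      linarith
    have hipos : (0 : ℝ) < ‖(i : ℂ)‖ := norm_pos_iff.mpr i.2.2
    have hzR3 : ‖z‖ ^ 3 ≤ R ^ 3 := pow_le_pow_left₀ (norm_nonneg _) hzR 3
    calc 2 / 3 * ‖z / (i : ℂ)‖ ^ 3 = 2 / 3 * (‖z‖ ^ 3 / ‖(i : ℂ)‖ ^ 3) := by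
          rw [norm_div, div_pow]
      _ ≤ 2 / 3 * (R ^ 3 / ‖(i : ℂ)‖ ^ 3) := by gcongr
      _ = 2 / 3 * R ^ 3 * (1 / ‖(i : ℂ)‖ ^ 3) := by ring
  -- summability of g over Sᶜ at each z in the ball
  have husum : Summable fun i : ↥(Sᶜ) => 2 / 3 * R ^ 3 * (1 / ‖((i : ι) : ℂ)‖ ^ 3) :=
    ((hsum.subtype (Sᶜ)).mul_left _)
  have hgsum : ∀ z ∈ Metric.ball (0 : ℂ) R, Summable fun i : ↥(Sᶜ) => g (i : ι) z := by
    intro z hz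
    apply Summable.of_norm_bounded husum
    intro i
    exact hgbound i.1 i.2 z hz
  refine ⟨fun z => (∏ i : ↥S, f (i : ι) z) * Complex.exp (∑' i : ↥(Sᶜ), g (i : ι) z), ?_, ?_⟩
  · -- differentiability
    have hfd : ∀ i : ι, Differentiable ℂ (f i) := by
      intro i
      apply Differentiable.mul
      · apply Differentiable.sub (differentiable_const _)
        exact differentiable_id.div_const _
      · apply Differentiable.cexp
        apply Differentiable.add
        · exact differentiable_id.div_const _
        · exact (differentiable_id.pow 2).div_const _
    apply DifferentiableOn.mul
    · apply Differentiable.differentiableOn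
      apply Differentiable.fun_finsetProd
      intro i _
      exact hfd i
    · apply DifferentiableOn.cexp
      apply differentiableOn_tsum_of_summable_norm husum
        (fun i => ?_) Metric.isOpen_ball (fun i z hz => hgbound i.1 i.2 z hz)
      intro z hz
      apply DifferentiableAt.differentiableWithinAt
      have hmem : 1 - z / ((i : ι) : ℂ) ∈ Complex.slitPlane := by
        have : ‖-(z / ((i : ι) : ℂ))‖ < 1 := by
          rw [norm_neg]
          exact lt_of_le_of_lt (hq i i.2 z hz) (by norm_num)
        have h' := Complex.mem_slitPlane_of_norm_lt_one this
        rwa [← sub_eq_add_neg] at h'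
      apply DifferentiableAt.add
      · apply DifferentiableAt.clog
        · exact (differentiableAt_const _).sub (differentiableAt_id.div_const _)
        · exact hmem
      · apply DifferentiableAt.add
        · exact differentiableAt_id.div_const _
        · exact (differentiableAt_id.pow 2).div_const _
  · -- HasProd
    intro z hz
    apply HasProd.mul_compl (s := S)
    · exact hasProd_fintype _
    · have hH : HasSum (fun i : ↥(Sᶜ) => g (i : ι) z) (∑' i : ↥(Sᶜ), g (i : ι) z) :=
        (hgsum z hz).hasSum
      exact hH.cexp.congr_fun fun i => (hfg i.1 i.2 z hz).symm

/-- **The Weierstrass sigma product converges and defines an entire function.**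
For every `z`, the family of factors `(1 − z/w)·exp(z/w + z²/(2w²))` indexed by the
nonzero lattice points is multipliable, and `σ` is differentiable on all of `ℂ`. -/
theorem wsigma_multipliable_and_entire (ω₁ ω₂ : ℂ) (hω : (ω₂ / ω₁).im ≠ 0) :
    (∀ z : ℂ, Multipliable fun w : {w : ℂ // w ∈ lat ω₁ ω₂ ∧ w ≠ 0} =>
      (1 - z / (w : ℂ)) * Complex.exp (z / (w : ℂ) + z ^ 2 / (2 * (w : ℂ) ^ 2))) ∧
    Differentiable ℂ (wsigma ω₁ ω₂) := by
  constructor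
  · intro z
    obtain ⟨F, _, hF⟩ := wsigma_key ω₁ ω₂ hω (R := ‖z‖ + 1)
      (by positivity)
    have hz : z ∈ Metric.ball (0 : ℂ) (‖z‖ + 1) := by
      simp only [Metric.mem_ball, dist_zero_right]
      linarith
    exact (hF z hz).multipliable
  · intro z₀
    obtain ⟨F, hFd, hF⟩ := wsigma_key ω₁ ω₂ hω (R := ‖z₀‖ + 1)
      (by positivity)
    have hz₀ : z₀ ∈ Metric.ball (0 : ℂ) (‖z₀‖ + 1) := by
      simp only [Metric.mem_ball, dist_zero_right]
      linarith
    have hG : DifferentiableAt ℂ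
        (fun z => ∏' w : {w : ℂ // w ∈ lat ω₁ ω₂ ∧ w ≠ 0},
          (1 - z / (w : ℂ)) * Complex.exp (z / (w : ℂ) + z ^ 2 / (2 * (w : ℂ) ^ 2))) z₀ := by
      have hFat : DifferentiableAt ℂ F z₀ :=
        (hFd z₀ hz₀).differentiableAt (Metric.isOpen_ball.mem_nhds hz₀)
      apply hFat.congr_of_eventuallyEq
      filter_upwards [Metric.isOpen_ball.mem_nhds hz₀] with z hz
      exact (hF z hz).tprod_eq
    exact differentiableAt_id.mul hG
end
end

section
/- For every z ∈ ℂ, σ(z) = 0 if and only if z ∈ Λ; moreover every zero of σ is simple, i.e. for every w ∈ Λ the derivative of σ at w is nonzero. -/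
open Complex

noncomputable section

namespace WSAux

open EisensteinSeries Metric Filter Finset

/-- The single factor of the Weierstrass product. -/
def fac (w z : ℂ) : ℂ := (1 - z / w) * Complex.exp (z / w + z ^ 2 / (2 * w ^ 2))

/-- The principal branch of the logarithm of the factor. -/
def hfun (u : ℂ) : ℂ := Complex.log (1 - u) + (u + u ^ 2 / 2)

lemma hfun_zero : hfun 0 = 0 := by simp [hfun]

lemma logTaylor_three (u : ℂ) : logTaylor 3 (-u) = -u - u ^ 2 / 2 := by
  simp [logTaylor, Finset.sum_range_succ]
  ring

lemma hfun_bound {u : ℂ} (hu : ‖u‖ ≤ 1 / 2) : ‖hfun u‖ ≤ ‖u‖ ^ 3 := by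
  have h1 : ‖(-u)‖ < 1 := by rw [norm_neg]; linarith
  have h2 := Complex.norm_log_sub_logTaylor_le 2 h1
  rw [logTaylor_three] at h2
  have he : Complex.log (1 + -u) - (-u - u ^ 2 / 2) = hfun u := by
    rw [show (1 : ℂ) + -u = 1 - u by ring, hfun]; ring
  rw [he] at h2
  have h3 : ‖-u‖ ^ (2 + 1) * (1 - ‖-u‖)⁻¹ / (2 + 1) ≤ ‖u‖ ^ 3 := by
    rw [norm_neg]
    have h4 : (1 - ‖u‖)⁻¹ ≤ 2 := by
      rw [inv_le_comm₀ (by linarith) (by norm_num)]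
      linarith
    have h5 : (0:ℝ) ≤ ‖u‖ ^ 3 := by positivity
    calc ‖u‖ ^ (2 + 1) * (1 - ‖u‖)⁻¹ / (2 + 1) ≤ ‖u‖ ^ 3 * 2 / 3 := by
          rw [show 2 + 1 = 3 from rfl]
          gcongr
          norm_num
      _ ≤ ‖u‖ ^ 3 := by linarith
  exact h2.trans h3

lemma hfun_contOn : ContinuousOn hfun {u : ℂ | ‖u‖ ≤ 1 / 2} := by
  intro u hu
  apply ContinuousAt.continuousWithinAt
  have hs : (1 : ℂ) - u ∈ slitPlane := by
    rw [sub_eq_add_neg]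
    exact mem_slitPlane_of_norm_lt_one (by rw [norm_neg]; exact lt_of_le_of_lt hu (by norm_num))
  have h1 : ContinuousAt (fun v : ℂ => Complex.log (1 - v)) u :=
    ContinuousAt.clog (by fun_prop) hs
  exact h1.add (by fun_prop)

lemma ne_of_norm_div_le_half {w z : ℂ} (hw : w ≠ 0) (h : ‖z / w‖ ≤ 1 / 2) : z ≠ w := by
  intro hzw
  rw [hzw, div_self hw] at h
  norm_num at h

lemma fac_eq_exp {w z : ℂ} (hw : w ≠ 0) (hzw : z ≠ w) :
    fac w z = Complex.exp (hfun (z / w)) := by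
  have h1 : (1 : ℂ) - z / w ≠ 0 := by
    intro h
    have h2 : z / w = 1 := (sub_eq_zero.mp h).symm
    rw [div_eq_one_iff_eq hw] at h2
    exact hzw h2
  have harg : z / w + z ^ 2 / (2 * w ^ 2) = z / w + (z / w) ^ 2 / 2 := by
    field_simp
  rw [fac, harg, hfun]
  conv_rhs => rw [Complex.exp_add]
  rw [Complex.exp_log h1]

lemma fac_ne_zero {w z : ℂ} (hw : w ≠ 0) (hzw : z ≠ w) : fac w z ≠ 0 := by
  rw [fac_eq_exp hw hzw]; exact Complex.exp_ne_zero _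

lemma log_fac {w z : ℂ} (hw : w ≠ 0) (hu : ‖z / w‖ ≤ 1 / 2) :
    Complex.log (fac w z) = hfun (z / w) := by
  have hzw := ne_of_norm_div_le_half hw hu
  have hb : ‖hfun (z / w)‖ ≤ 1 / 8 := by
    calc ‖hfun (z / w)‖ ≤ ‖z / w‖ ^ 3 := hfun_bound hu
      _ ≤ (1 / 2) ^ 3 := by gcongr
      _ = 1 / 8 := by norm_num
  have him : |(hfun (z / w)).im| ≤ 1 / 8 := le_trans (Complex.abs_im_le_norm _) hb
  have hpi := Real.pi_gt_three
  have him' := abs_le.mp him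
  rw [fac_eq_exp hw hzw, Complex.log_exp (by linarith [him'.1]) (by linarith [him'.2])]

lemma fac_continuous (w : ℂ) : Continuous (fac w) := by
  unfold fac
  exact (continuous_const.sub (continuous_id.div_const w)).mul
    (Complex.continuous_exp.comp ((continuous_id.div_const w).add
      ((continuous_pow 2).div_const (2 * w ^ 2))))

lemma fac_at_zero (w : ℂ) : fac w 0 = 1 := by simp [fac]

variable {ω₁ ω₂ : ℂ}

/-- The index type of the product. -/
abbrev Idx (ω₁ ω₂ : ℂ) := {w : ℂ // w ∈ lat ω₁ ω₂ ∧ w ≠ 0}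

lemma omega1_ne (hω : (ω₂ / ω₁).im ≠ 0) : ω₁ ≠ 0 := by
  rintro rfl; simp at hω

lemma summable3 (hω : (ω₂ / ω₁).im ≠ 0) :
    Summable (fun w : Idx ω₁ ω₂ => (‖(w : ℂ)‖ ^ 3)⁻¹) := by
  have hω₁ : ω₁ ≠ 0 := omega1_ne hω
  set τ : ℂ := ω₂ / ω₁ with hτdef
  set ζ : ℂ := if 0 < τ.im then τ else -τ with hζdef
  have hζ : 0 < ζ.im := by
    rw [hζdef]
    split_ifs with h
    · exact h
    · rw [Complex.neg_im]
      rcases lt_or_gt_of_ne hω with h' | h'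
      · linarith
      · exact absurd h' h
  set s : ℤ := if 0 < τ.im then 1 else -1 with hsdef
  have hsζ : (s : ℂ) * ζ = τ := by
    rw [hsdef, hζdef]
    split_ifs <;> push_cast <;> ring
  set z : UpperHalfPlane := ⟨ζ, hζ⟩ with hzdef
  have hzc : (z : ℂ) = ζ := rfl
  -- representation of lattice points
  have hrep : ∀ w : Idx ω₁ ω₂, ∃ m n : ℤ, (w : ℂ) = (m : ℂ) * ω₁ + (n : ℂ) * ω₂ :=
    fun w => w.2.1
  let mf : Idx ω₁ ω₂ → ℤ := fun w => (hrep w).choose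
  let nf : Idx ω₁ ω₂ → ℤ := fun w => (hrep w).choose_spec.choose
  have hmn : ∀ w : Idx ω₁ ω₂, (w : ℂ) = (mf w : ℂ) * ω₁ + (nf w : ℂ) * ω₂ :=
    fun w => (hrep w).choose_spec.choose_spec
  let j : Idx ω₁ ω₂ → (Fin 2 → ℤ) := fun w => ![s * nf w, mf w]
  have hkey : ∀ w : Idx ω₁ ω₂, ((j w 0 : ℂ) * z + (j w 1 : ℂ)) * ω₁ = (w : ℂ) := by
    intro w
    have : ((s * nf w : ℤ) : ℂ) * ζ = (nf w : ℂ) * τ := by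
      push_cast
      calc ((s : ℂ) * nf w) * ζ = (nf w : ℂ) * ((s : ℂ) * ζ) := by ring
        _ = (nf w : ℂ) * τ := by rw [hsζ]
    simp only [j, Matrix.cons_val_zero, Matrix.cons_val_one, Matrix.head_cons, hzc]
    rw [hmn w]
    rw [this]
    have hτω : τ * ω₁ = ω₂ := div_mul_cancel₀ _ hω₁
    calc ((nf w : ℂ) * τ + (mf w : ℂ)) * ω₁ = (mf w : ℂ) * ω₁ + (nf w : ℂ) * (τ * ω₁) := by ring
      _ = (mf w : ℂ) * ω₁ + (nf w : ℂ) * ω₂ := by rw [hτω]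
  have hinj : Function.Injective j := by
    intro w w' h
    have := hkey w
    rw [h, hkey w'] at this
    exact Subtype.ext this.symm
  have hne : ∀ w : Idx ω₁ ω₂, j w ≠ 0 := by
    intro w h
    apply w.2.2
    rw [← hkey w, h]
    simp
  set c : ℝ := r z * ‖ω₁‖ with hcdef
  have hc : 0 < c := mul_pos (r_pos z) (by simpa using hω₁)
  have hlow : ∀ w : Idx ω₁ ω₂, c * ‖j w‖ ≤ ‖(w : ℂ)‖ := by
    intro w
    have h1 : r z * ‖j w‖ ≤ ‖(j w 0 : ℂ) * z + (j w 1 : ℂ)‖ := r_mul_max_le z (hne w)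
    have h2 : ‖(w : ℂ)‖ = ‖(j w 0 : ℂ) * z + (j w 1 : ℂ)‖ * ‖ω₁‖ := by
      rw [← norm_mul, hkey w]
    rw [h2, hcdef]
    calc r z * ‖ω₁‖ * ‖j w‖ = (r z * ‖j w‖) * ‖ω₁‖ := by ring
      _ ≤ ‖(j w 0 : ℂ) * z + (j w 1 : ℂ)‖ * ‖ω₁‖ := by
          apply mul_le_mul_of_nonneg_right h1 (norm_nonneg _)
  have hsum : Summable fun x : Fin 2 → ℤ => ‖x‖ ^ (-(3 : ℝ)) :=
    summable_one_div_norm_rpow (by norm_num)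
  have hsum2 : Summable ((fun x : Fin 2 → ℤ => ‖x‖ ^ (-(3 : ℝ))) ∘ j) :=
    hsum.comp_injective hinj
  have hsum3 : Summable (fun w : Idx ω₁ ω₂ => (c ^ 3)⁻¹ * ((‖j w‖ ^ 3)⁻¹)) := by
    apply Summable.mul_left
    apply hsum2.congr
    intro w
    rw [Function.comp_apply, Real.rpow_neg (norm_nonneg _)]
    congr 1
    rw [show (3 : ℝ) = ((3 : ℕ) : ℝ) by norm_num, Real.rpow_natCast]
  apply Summable.of_nonneg_of_le (fun w => by positivity) _ hsum3
  intro w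
  have hjw : 0 < ‖j w‖ := norm_pos_iff.mpr (hne w)
  have h1 : c ^ 3 * ‖j w‖ ^ 3 ≤ ‖(w : ℂ)‖ ^ 3 := by
    calc c ^ 3 * ‖j w‖ ^ 3 = (c * ‖j w‖) ^ 3 := by ring
      _ ≤ ‖(w : ℂ)‖ ^ 3 := by
          apply pow_le_pow_left₀ (by positivity) (hlow w)
  rw [← mul_inv]
  exact inv_anti₀ (by positivity) h1

lemma finite_small (hω : (ω₂ / ω₁).im ≠ 0) (R : ℝ) :
    {w : Idx ω₁ ω₂ | ‖(w : ℂ)‖ ≤ R}.Finite := by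
  have h := (summable3 hω).tendsto_cofinite_zero
  set R' : ℝ := max R 1 with hR'
  have hR'pos : 0 < R' := lt_of_lt_of_le one_pos (le_max_right _ _)
  have hev : ∀ᶠ w : Idx ω₁ ω₂ in cofinite, (‖(w : ℂ)‖ ^ 3)⁻¹ < (R' ^ 3)⁻¹ :=
    h.eventually_lt_const (by positivity)
  rw [eventually_cofinite] at hev
  apply hev.subset
  intro w hw
  simp only [Set.mem_setOf_eq, not_lt]
  have hwpos : 0 < ‖(w : ℂ)‖ := norm_pos_iff.mpr w.2.2
  apply inv_anti₀ (by positivity)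
  have : ‖(w : ℂ)‖ ≤ R' := le_trans hw (le_max_left _ _)
  gcongr

lemma hasProd_decomp (hω : (ω₂ / ω₁).im ≠ 0) (z : ℂ) (S : Finset (Idx ω₁ ω₂))
    (hS : ∀ w : Idx ω₁ ω₂, w ∉ S → ‖z / (w : ℂ)‖ ≤ 1 / 2) :
    HasProd (fun w : Idx ω₁ ω₂ => fac (w : ℂ) z)
      ((∏ w ∈ S, fac (w : ℂ) z) *
        Complex.exp (∑' w : ↥((↑S : Set (Idx ω₁ ω₂))ᶜ), hfun (z / ((w : Idx ω₁ ω₂) : ℂ)))) := by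
  have h1 : HasProd ((fun w : Idx ω₁ ω₂ => fac (w : ℂ) z) ∘ (↑) : ↥(↑S : Set (Idx ω₁ ω₂)) → ℂ)
      (∏ w ∈ S, fac (w : ℂ) z) := S.hasProd _
  have hmem : ∀ w : ↥((↑S : Set (Idx ω₁ ω₂))ᶜ), ‖z / ((w : Idx ω₁ ω₂) : ℂ)‖ ≤ 1 / 2 := by
    intro w
    exact hS _ (fun h => w.2 (Finset.mem_coe.mpr h))
  have hsummable : Summable (fun w : ↥((↑S : Set (Idx ω₁ ω₂))ᶜ) =>
      hfun (z / ((w : Idx ω₁ ω₂) : ℂ))) := by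
    apply Summable.of_norm_bounded (((summable3 hω).subtype _).mul_left (‖z‖ ^ 3))
    intro w
    calc ‖hfun (z / ((w : Idx ω₁ ω₂) : ℂ))‖ ≤ ‖z / ((w : Idx ω₁ ω₂) : ℂ)‖ ^ 3 :=
          hfun_bound (hmem w)
      _ = ‖z‖ ^ 3 * (‖((w : Idx ω₁ ω₂) : ℂ)‖ ^ 3)⁻¹ := by
          rw [norm_div, div_pow, div_eq_mul_inv]
  have h2 : HasProd ((fun w : Idx ω₁ ω₂ => fac (w : ℂ) z) ∘ (↑) : ↥((↑S : Set (Idx ω₁ ω₂))ᶜ) → ℂ)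
      (Complex.exp (∑' w : ↥((↑S : Set (Idx ω₁ ω₂))ᶜ), hfun (z / ((w : Idx ω₁ ω₂) : ℂ)))) := by
    have h3 := hsummable.hasSum.cexp
    have hfe : ((fun w : Idx ω₁ ω₂ => fac (w : ℂ) z) ∘ (↑) : ↥((↑S : Set (Idx ω₁ ω₂))ᶜ) → ℂ) =
        (cexp ∘ fun w : ↥((↑S : Set (Idx ω₁ ω₂))ᶜ) => hfun (z / ((w : Idx ω₁ ω₂) : ℂ))) := by
      funext w
      exact fac_eq_exp (w : Idx ω₁ ω₂).2.2
        (ne_of_norm_div_le_half (w : Idx ω₁ ω₂).2.2 (hmem w))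
    rw [hfe]
    exact h3
  exact h1.mul_compl h2

lemma sigma_eq (z : ℂ) :
    wsigma ω₁ ω₂ z = z * ∏' w : Idx ω₁ ω₂, fac (w : ℂ) z := rfl

lemma sigma_factored (hω : (ω₂ / ω₁).im ≠ 0) (z : ℂ) (S : Finset (Idx ω₁ ω₂))
    (hS : ∀ w : Idx ω₁ ω₂, w ∉ S → ‖z / (w : ℂ)‖ ≤ 1 / 2) :
    wsigma ω₁ ω₂ z = z * ((∏ w ∈ S, fac (w : ℂ) z) *
      Complex.exp (∑' w : ↥((↑S : Set (Idx ω₁ ω₂))ᶜ), hfun (z / ((w : Idx ω₁ ω₂) : ℂ)))) := by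
  rw [sigma_eq, (hasProd_decomp hω z S hS).tprod_eq]

lemma cont_tail (hω : (ω₂ / ω₁).im ≠ 0) (S : Finset (Idx ω₁ ω₂)) (c : ℂ) (ρ : ℝ)
    (hS : ∀ z ∈ closedBall c ρ, ∀ w : Idx ω₁ ω₂, w ∉ S → ‖z / (w : ℂ)‖ ≤ 1 / 2) :
    ContinuousOn (fun z : ℂ =>
        ∑' w : ↥((↑S : Set (Idx ω₁ ω₂))ᶜ), hfun (z / ((w : Idx ω₁ ω₂) : ℂ)))
      (closedBall c ρ) := by
  have hnormz : ∀ z ∈ closedBall c ρ, ‖z‖ ≤ ‖c‖ + ρ := by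
    intro z hz
    rw [mem_closedBall] at hz
    calc ‖z‖ = ‖c + (z - c)‖ := by ring_nf
      _ ≤ ‖c‖ + ‖z - c‖ := norm_add_le _ _
      _ ≤ ‖c‖ + ρ := by
          have : ‖z - c‖ = dist z c := by rw [dist_eq_norm]
          linarith [this ▸ hz]
  apply TendstoUniformlyOn.continuousOn
    (tendstoUniformlyOn_tsum (u := fun w : ↥((↑S : Set (Idx ω₁ ω₂))ᶜ) =>
      (‖c‖ + |ρ|) ^ 3 * (‖((w : Idx ω₁ ω₂) : ℂ)‖ ^ 3)⁻¹)
      (((summable3 hω).subtype _).mul_left _) ?_)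
  · refine Filter.Eventually.frequently (Filter.Eventually.of_forall ?_)
    intro t
    apply continuousOn_finset_sum
    intro w _
    apply hfun_contOn.comp (Continuous.continuousOn (continuous_id.div_const _))
    intro z hz
    exact hS z hz _ (fun h => w.2 (Finset.mem_coe.mpr h))
  · intro w x hx
    calc ‖hfun (x / ((w : Idx ω₁ ω₂) : ℂ))‖ ≤ ‖x / ((w : Idx ω₁ ω₂) : ℂ)‖ ^ 3 :=
          hfun_bound (hS x hx _ (fun h => w.2 (Finset.mem_coe.mpr h)))
      _ = ‖x‖ ^ 3 * (‖((w : Idx ω₁ ω₂) : ℂ)‖ ^ 3)⁻¹ := by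
          rw [norm_div, div_pow, div_eq_mul_inv]
      _ ≤ (‖c‖ + |ρ|) ^ 3 * (‖((w : Idx ω₁ ω₂) : ℂ)‖ ^ 3)⁻¹ := by
          have hx' : ‖x‖ ≤ ‖c‖ + |ρ| := le_trans (hnormz x hx) (by gcongr; exact le_abs_self ρ)
          gcongr

end WSAux

open WSAux Metric Filter

/-- **The Weierstrass sigma function vanishes exactly on the lattice, with simple zeros.**
`σ(z) = 0` iff `z ∈ lat`, and the derivative of `σ` is nonzero at every lattice point. -/
theorem wsigma_zeros (ω₁ ω₂ : ℂ) (hω : (ω₂ / ω₁).im ≠ 0) :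
    (∀ z : ℂ, wsigma ω₁ ω₂ z = 0 ↔ z ∈ lat ω₁ ω₂) ∧
    (∀ w ∈ lat ω₁ ω₂, deriv (wsigma ω₁ ω₂) w ≠ 0) := by
  have hzero : ∀ z : ℂ, wsigma ω₁ ω₂ z = 0 ↔ z ∈ lat ω₁ ω₂ := by
    intro z
    constructor
    · intro h0
      by_contra hz
      have hz0 : z ≠ 0 := by
        rintro rfl
        exact hz ⟨0, 0, by norm_num⟩
      set S : Finset (Idx ω₁ ω₂) := (finite_small hω (2 * ‖z‖)).toFinset with hSdef
      have hS : ∀ w : Idx ω₁ ω₂, w ∉ S → ‖z / (w : ℂ)‖ ≤ 1 / 2 := by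
        intro w hw
        rw [hSdef, Set.Finite.mem_toFinset] at hw
        simp only [Set.mem_setOf_eq, not_le] at hw
        have hwpos : 0 < ‖(w : ℂ)‖ := norm_pos_iff.mpr w.2.2
        rw [norm_div, div_le_iff₀ hwpos]
        linarith
      rw [sigma_factored hω z S hS] at h0
      have h1 : (∏ w ∈ S, fac (w : ℂ) z) ≠ 0 := by
        apply Finset.prod_ne_zero_iff.mpr
        intro w _
        apply fac_ne_zero w.2.2
        intro hzw
        exact hz (hzw ▸ w.2.1)
      exact (mul_ne_zero hz0 (mul_ne_zero h1 (Complex.exp_ne_zero _))) h0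
    · intro hz
      rcases eq_or_ne z 0 with rfl | hz0
      · simp [wsigma]
      · set i₀ : Idx ω₁ ω₂ := ⟨z, hz, hz0⟩ with hi₀
        set S : Finset (Idx ω₁ ω₂) := (finite_small hω (2 * ‖z‖)).toFinset with hSdef
        have hS : ∀ w : Idx ω₁ ω₂, w ∉ S → ‖z / (w : ℂ)‖ ≤ 1 / 2 := by
          intro w hw
          rw [hSdef, Set.Finite.mem_toFinset] at hw
          simp only [Set.mem_setOf_eq, not_le] at hw
          have hwpos : 0 < ‖(w : ℂ)‖ := norm_pos_iff.mpr w.2.2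
          rw [norm_div, div_le_iff₀ hwpos]
          linarith
        have hi₀S : i₀ ∈ S := by
          rw [hSdef, Set.Finite.mem_toFinset]
          show ‖((i₀ : Idx ω₁ ω₂) : ℂ)‖ ≤ 2 * ‖z‖
          have h1 : ((i₀ : Idx ω₁ ω₂) : ℂ) = z := rfl
          rw [h1]
          linarith [norm_nonneg z]
        rw [sigma_factored hω z S hS]
        have hfz : fac ((i₀ : Idx ω₁ ω₂) : ℂ) z = 0 := by
          show fac z z = 0
          rw [fac, div_self hz0]
          ring
        rw [Finset.prod_eq_zero hi₀S hfz]
        ring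
  refine ⟨hzero, ?_⟩
  intro w₀ hw₀
  rcases eq_or_ne w₀ 0 with rfl | hw0
  · -- derivative at 0 is 1
    set S : Finset (Idx ω₁ ω₂) := (finite_small hω 2).toFinset with hSdef
    have hS : ∀ z ∈ closedBall (0 : ℂ) 1, ∀ w : Idx ω₁ ω₂, w ∉ S → ‖z / (w : ℂ)‖ ≤ 1 / 2 := by
      intro z hz w hw
      rw [hSdef, Set.Finite.mem_toFinset] at hw
      simp only [Set.mem_setOf_eq, not_le] at hw
      have hwpos : (0 : ℝ) < ‖(w : ℂ)‖ := lt_trans two_pos hw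
      rw [norm_div, div_le_iff₀ hwpos]
      have hz1 : ‖z‖ ≤ 1 := by simpa [mem_closedBall, dist_eq_norm] using hz
      linarith
    set g : ℂ → ℂ := fun z => (∏ w ∈ S, fac (w : ℂ) z) *
      Complex.exp (∑' w : ↥((↑S : Set (Idx ω₁ ω₂))ᶜ), hfun (z / ((w : Idx ω₁ ω₂) : ℂ)))
      with hgdef
    have hfact : ∀ z ∈ closedBall (0 : ℂ) 1, wsigma ω₁ ω₂ z = z * g z := fun z hz =>
      sigma_factored hω z S (fun w hw => hS z hz w hw)
    have hgc : ContinuousAt g 0 := by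
      have h1 : ContinuousOn g (closedBall (0 : ℂ) 1) := by
        apply ContinuousOn.mul
        · exact (continuous_finset_prod S (fun w _ => fac_continuous (w : ℂ))).continuousOn
        · exact Complex.continuous_exp.comp_continuousOn (cont_tail hω S 0 1 hS)
      exact h1.continuousAt (closedBall_mem_nhds _ one_pos)
    have hg0 : g 0 = 1 := by
      rw [hgdef]
      simp [fac_at_zero, zero_div, hfun_zero, tsum_zero]
    have hσ0 : wsigma ω₁ ω₂ 0 = 0 := (hzero 0).mpr ⟨0, 0, by norm_num⟩
    have hd : HasDerivAt (wsigma ω₁ ω₂) (g 0) 0 := by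
      rw [hasDerivAt_iff_tendsto_slope]
      have ht : Filter.Tendsto g (nhdsWithin (0 : ℂ) {(0 : ℂ)}ᶜ) (nhds (g 0)) :=
        hgc.tendsto.mono_left nhdsWithin_le_nhds
      apply ht.congr'
      filter_upwards [self_mem_nhdsWithin,
        mem_nhdsWithin_of_mem_nhds (closedBall_mem_nhds (0 : ℂ) one_pos)] with z hz hzb
      have hzne : z ≠ 0 := hz
      rw [slope_def_field, hfact z hzb, hσ0]
      field_simp
      ring
    rw [hd.deriv, hg0]
    exact one_ne_zero
  · -- derivative at a nonzero lattice point
    set i₀ : Idx ω₁ ω₂ := ⟨w₀, hw₀, hw0⟩ with hi₀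
    set S : Finset (Idx ω₁ ω₂) := (finite_small hω (2 * (‖w₀‖ + 1))).toFinset with hSdef
    have hi₀S : i₀ ∈ S := by
      rw [hSdef, Set.Finite.mem_toFinset]
      show ‖((i₀ : Idx ω₁ ω₂) : ℂ)‖ ≤ 2 * (‖w₀‖ + 1)
      have h1 : ((i₀ : Idx ω₁ ω₂) : ℂ) = w₀ := rfl
      rw [h1]
      linarith [norm_nonneg w₀]
    have hS : ∀ z ∈ closedBall w₀ 1, ∀ w : Idx ω₁ ω₂, w ∉ S → ‖z / (w : ℂ)‖ ≤ 1 / 2 := by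
      intro z hz w hw
      rw [hSdef, Set.Finite.mem_toFinset] at hw
      simp only [Set.mem_setOf_eq, not_le] at hw
      have hz1 : ‖z‖ ≤ ‖w₀‖ + 1 := by
        rw [mem_closedBall, dist_eq_norm] at hz
        calc ‖z‖ = ‖w₀ + (z - w₀)‖ := by ring_nf
          _ ≤ ‖w₀‖ + ‖z - w₀‖ := norm_add_le _ _
          _ ≤ ‖w₀‖ + 1 := by linarith
      rw [norm_div, div_le_iff₀ (by linarith [norm_nonneg w₀] : (0:ℝ) < ‖(w : ℂ)‖)]
      linarith
    set g : ℂ → ℂ := fun z =>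
      Complex.exp (∑' w : ↥((↑S : Set (Idx ω₁ ω₂))ᶜ), hfun (z / ((w : Idx ω₁ ω₂) : ℂ)))
      with hgdef
    set E : ℂ → ℂ := fun z => ∏ w ∈ S.erase i₀, fac ((w : Idx ω₁ ω₂) : ℂ) z with hEdef
    have hfact : ∀ z ∈ closedBall w₀ 1,
        wsigma ω₁ ω₂ z = z * ((fac w₀ z * E z) * g z) := by
      intro z hz
      rw [sigma_factored hω z S (fun w hw => hS z hz w hw)]
      rw [hEdef]
      rw [← Finset.mul_prod_erase S _ hi₀S]
    have hfacw : ∀ z : ℂ, fac w₀ z =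
        -(w₀)⁻¹ * (z - w₀) * Complex.exp (z / w₀ + z ^ 2 / (2 * w₀ ^ 2)) := by
      intro z
      rw [fac]
      have : (1 : ℂ) - z / w₀ = -(w₀)⁻¹ * (z - w₀) := by
        field_simp
        ring
      rw [this]
    set φ : ℂ → ℂ := fun z =>
      z * ((-(w₀)⁻¹ * Complex.exp (z / w₀ + z ^ 2 / (2 * w₀ ^ 2)) * E z) * g z) with hφdef
    have hφc : ContinuousAt φ w₀ := by
      have hEc : Continuous E := by
        rw [hEdef]
        exact continuous_finset_prod _ (fun w _ => fac_continuous _)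
      have hgc : ContinuousOn g (closedBall w₀ 1) := by
        rw [hgdef]
        exact Complex.continuous_exp.comp_continuousOn (cont_tail hω S w₀ 1 hS)
      have hXc : Continuous fun z : ℂ =>
          -(w₀)⁻¹ * Complex.exp (z / w₀ + z ^ 2 / (2 * w₀ ^ 2)) :=
        continuous_const.mul (Complex.continuous_exp.comp
          ((continuous_id.div_const w₀).add ((continuous_pow 2).div_const (2 * w₀ ^ 2))))
      have h1 : ContinuousOn φ (closedBall w₀ 1) := by
        rw [hφdef]
        exact continuousOn_id.mul (((hXc.mul hEc).continuousOn).mul hgc)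
      exact h1.continuousAt (closedBall_mem_nhds w₀ one_pos)
    have hσw : wsigma ω₁ ω₂ w₀ = 0 := (hzero w₀).mpr hw₀
    have hd : HasDerivAt (wsigma ω₁ ω₂) (φ w₀) w₀ := by
      rw [hasDerivAt_iff_tendsto_slope]
      have ht : Filter.Tendsto φ (nhdsWithin w₀ {w₀}ᶜ) (nhds (φ w₀)) :=
        hφc.tendsto.mono_left nhdsWithin_le_nhds
      apply ht.congr'
      filter_upwards [self_mem_nhdsWithin,
        mem_nhdsWithin_of_mem_nhds (closedBall_mem_nhds w₀ one_pos)] with z hz hzb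
      have hzne : z ≠ w₀ := hz
      have hzsub : z - w₀ ≠ 0 := sub_ne_zero.mpr hzne
      rw [hφdef, slope_def_field, hfact z hzb, hσw, hfacw z]
      field_simp
      ring
    rw [hd.deriv]
    have hE : E w₀ ≠ 0 := by
      rw [hEdef]
      apply Finset.prod_ne_zero_iff.mpr
      intro w hw
      apply fac_ne_zero w.2.2
      intro hzw
      exact (Finset.mem_erase.mp hw).1 (Subtype.ext hzw.symm)
    rw [hφdef]
    simp only
    exact mul_ne_zero hw0 (mul_ne_zero (mul_ne_zero
      (mul_ne_zero (neg_ne_zero.mpr (inv_ne_zero hw0)) (Complex.exp_ne_zero _)) hE)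
      (Complex.exp_ne_zero _))
end
end

section
/- For every z ∈ ℂ with z ∉ Λ, the logarithmic derivative ζ(u) = σ'(u)/σ(u) is complex-differentiable at z, and ℘(z) = − ζ'(z), i.e. the Weierstrass ℘-function satisfies ℘(z) = −(d²/dz²) log σ(z) away from the lattice. -/
open Complex

noncomputable section

/-- The Weierstrass zeta function `ζ(u) = σ'(u)/σ(u)`, the logarithmic derivative of `σ`. -/
def wzeta (ω₁ ω₂ : ℂ) (u : ℂ) : ℂ :=
  deriv (wsigma ω₁ ω₂) u / wsigma ω₁ ω₂ u

/-- The Weierstrass ℘-function of the lattice `Λ = ℤω₁ + ℤω₂`: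
`℘(z) = 1/z² + ∑_{w ∈ Λ, w ≠ 0} (1/(z−w)² − 1/w²)`. -/
def wp (ω₁ ω₂ : ℂ) (z : ℂ) : ℂ :=
  1 / z ^ 2 + ∑' w : {w : ℂ // w ∈ lat ω₁ ω₂ ∧ w ≠ 0},
    (1 / (z - (w : ℂ)) ^ 2 - 1 / (w : ℂ) ^ 2)

/-! On a compact set only finitely many nonzero lattice points satisfy `|w| < 2|z|`, and for the
others the genus-two factor `E(z/w) = (1 - z/w) exp(z/w + z²/2w²)` is `1 + O(|z/w|³)`. Since
`∑ |w|⁻³ < ∞`, the product defining `σ` converges locally uniformly, so its logarithmic derivative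
is the sum of those of the factors: `ζ(z) = 1/z + ∑ (1/(z - w) + 1/w + z/w²)`. This series
converges locally uniformly as well, and differentiating it term by term (Weierstrass) gives
`ζ' = -℘`. -/

open Filter Topology

theorem HasSumLocallyUniformlyOn.hasSum_deriv {ι : Type*} {f : ι → ℂ → ℂ} {g : ℂ → ℂ}
    {U : Set ℂ} {z : ℂ} (h : HasSumLocallyUniformlyOn f g U)
    (hf : ∀ i, DifferentiableOn ℂ (f i) U) (hU : IsOpen U) (hz : z ∈ U) :
    HasSum (fun i => deriv (f i) z) (deriv g z) := by
  have hd := (TendstoLocallyUniformlyOn.deriv h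
    (Eventually.of_forall fun s => DifferentiableOn.fun_sum fun i _ => hf i) hU).tendsto_at hz
  exact hd.congr fun s => deriv_fun_sum fun i _ => (hf i).differentiableAt (hU.mem_nhds hz)

lemma norm_log_one_sub_add_le {t : ℂ} (ht : ‖t‖ ≤ 1 / 2) :
    ‖log (1 - t) + t + t ^ 2 / 2‖ ≤ ‖t‖ ^ 3 := by
  have h := norm_log_sub_logTaylor_le 2 (z := -t) (by rw [norm_neg]; linarith)
  have hinv : (1 - ‖t‖)⁻¹ ≤ 2 := by
    rw [inv_le_comm₀ (by linarith) two_pos]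
    linarith
  simp only [logTaylor, Finset.sum_range_succ, Finset.sum_range_zero, norm_neg] at h
  norm_num [← sub_eq_add_neg] at h
  calc ‖log (1 - t) + t + t ^ 2 / 2‖ ≤ ‖t‖ ^ 3 * (1 - ‖t‖)⁻¹ / 3 := by
        convert h using 2
        ring
    _ ≤ ‖t‖ ^ 3 * 2 / 3 := by gcongr
    _ ≤ ‖t‖ ^ 3 := by nlinarith [pow_nonneg (norm_nonneg t) 3]

def weierstrassFactor (w z : ℂ) : ℂ := (1 - z / w) * cexp (z / w + z ^ 2 / (2 * w ^ 2))

def weierstrassZetaTerm (w z : ℂ) : ℂ := 1 / (z - w) + 1 / w + z / w ^ 2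

lemma differentiable_weierstrassFactor (w : ℂ) : Differentiable ℂ (weierstrassFactor w) := by
  unfold weierstrassFactor
  fun_prop

lemma weierstrassFactor_ne_zero {w z : ℂ} (hw : w ≠ 0) (hz : z ≠ w) :
    weierstrassFactor w z ≠ 0 :=
  mul_ne_zero (by rwa [sub_ne_zero, ne_comm, ne_eq, div_eq_one_iff_eq hw]) (exp_ne_zero _)

lemma norm_weierstrassFactor_sub_one_le {w z : ℂ} (h : 2 * ‖z‖ ≤ ‖w‖) :
    ‖weierstrassFactor w z - 1‖ ≤ 2 * ‖z‖ ^ 3 / ‖w‖ ^ 3 := by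
  set t := z / w with ht_def
  have ht : ‖t‖ ≤ 1 / 2 := by
    rw [norm_div]
    rcases (norm_nonneg w).eq_or_lt with hw | hw
    · simp [← hw]
    · rw [div_le_iff₀ hw]
      linarith
  have h1t : 1 - t ≠ 0 := fun h0 => by
    rw [sub_eq_zero] at h0
    rw [← h0, norm_one] at ht
    norm_num at ht
  have hE : weierstrassFactor w z = cexp (log (1 - t) + t + t ^ 2 / 2) := by
    rw [add_assoc, exp_add, exp_log h1t, weierstrassFactor, ht_def]
    congr 2
    ring
  have hL := norm_log_one_sub_add_le ht
  calc ‖weierstrassFactor w z - 1‖ ≤ 2 * ‖log (1 - t) + t + t ^ 2 / 2‖ := by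
        rw [hE]
        refine norm_exp_sub_one_le (hL.trans ?_)
        calc ‖t‖ ^ 3 ≤ (1 / 2) ^ 3 := by gcongr
          _ ≤ 1 := by norm_num
    _ ≤ 2 * ‖t‖ ^ 3 := by gcongr
    _ = 2 * ‖z‖ ^ 3 / ‖w‖ ^ 3 := by rw [norm_div, div_pow, mul_div_assoc]

lemma logDeriv_weierstrassFactor {w z : ℂ} (hw : w ≠ 0) (hz : z ≠ w) :
    logDeriv (weierstrassFactor w) z = weierstrassZetaTerm w z := by
  have hzw : z - w ≠ 0 := sub_ne_zero.mpr hz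
  have hexp : HasDerivAt (fun z : ℂ => z / w + z ^ 2 / (2 * w ^ 2)) (1 / w + z / w ^ 2) z := by
    refine (((hasDerivAt_id z).div_const w).fun_add
      ((hasDerivAt_pow 2 z).div_const (2 * w ^ 2))).congr_deriv ?_
    field_simp
    ring
  have hd : HasDerivAt (weierstrassFactor w) _ z :=
    (((hasDerivAt_id z).div_const w).const_sub 1).mul hexp.cexp
  rw [logDeriv_apply, hd.deriv, weierstrassFactor, weierstrassZetaTerm, id]
  field_simp
  ring

lemma norm_weierstrassZetaTerm_le {w z : ℂ} (hw : w ≠ 0) (h : 2 * ‖z‖ ≤ ‖w‖) :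
    ‖weierstrassZetaTerm w z‖ ≤ 2 * ‖z‖ ^ 2 / ‖w‖ ^ 3 := by
  have hw' : 0 < ‖w‖ := norm_pos_iff.mpr hw
  have hzw : ‖w‖ / 2 ≤ ‖z - w‖ := by
    rw [norm_sub_rev]
    linarith [norm_sub_norm_le w z]
  have hz : z - w ≠ 0 := norm_pos_iff.mp (by linarith)
  have heq : weierstrassZetaTerm w z = z ^ 2 / (w ^ 2 * (z - w)) := by
    rw [weierstrassZetaTerm]
    field_simp
    ring
  rw [heq, norm_div, norm_mul, norm_pow, norm_pow]
  calc ‖z‖ ^ 2 / (‖w‖ ^ 2 * ‖z - w‖) ≤ ‖z‖ ^ 2 / (‖w‖ ^ 2 * (‖w‖ / 2)) := by gcongr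
    _ = 2 * ‖z‖ ^ 2 / ‖w‖ ^ 3 := by field_simp

lemma hasDerivAt_weierstrassZetaTerm {w z : ℂ} (hz : z ≠ w) :
    HasDerivAt (weierstrassZetaTerm w) (-(1 / (z - w) ^ 2 - 1 / w ^ 2)) z := by
  have hzw : z - w ≠ 0 := sub_ne_zero.mpr hz
  unfold weierstrassZetaTerm
  simp only [one_div]
  refine (((((hasDerivAt_id z).sub_const w).inv hzw).add_const w⁻¹).add
    ((hasDerivAt_id z).div_const (w ^ 2))).congr_deriv ?_
  simp only [id]
  ring

section WeierstrassProduct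

variable {ι : Type*} {a : ι → ℂ}

lemma eventually_cofinite_le_norm (ha₀ : ∀ i, a i ≠ 0)
    (ha : Summable fun i => (‖a i‖ ^ 3)⁻¹) (R : ℝ) : ∀ᶠ i in cofinite, R ≤ ‖a i‖ := by
  have hR : 0 < max R 1 := lt_max_of_lt_right one_pos
  filter_upwards [ha.tendsto_cofinite_zero.eventually (gt_mem_nhds (inv_pos.mpr (pow_pos hR 3)))]
    with i hi
  rw [inv_lt_inv₀ (pow_pos (norm_pos_iff.mpr (ha₀ i)) 3) (pow_pos hR 3),
    pow_lt_pow_iff_left₀ hR.le (norm_nonneg _) three_ne_zero] at hi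
  exact (le_max_left R 1).trans hi.le

lemma eventually_nhds_forall_ne (ha₀ : ∀ i, a i ≠ 0)
    (ha : Summable fun i => (‖a i‖ ^ 3)⁻¹) {z : ℂ} (hz : ∀ i, z ≠ a i) :
    ∀ᶠ x in 𝓝 z, ∀ i, x ≠ a i := by
  have hS := eventually_cofinite.mp (eventually_cofinite_le_norm ha₀ ha (‖z‖ + 1))
  filter_upwards [Metric.ball_mem_nhds z one_pos,
    hS.eventually_all.mpr fun i _ => eventually_ne_nhds (hz i)] with x hx hxS i
  by_cases hi : i ∈ {i | ¬‖z‖ + 1 ≤ ‖a i‖}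
  · exact hxS i hi
  · rintro rfl
    have := norm_le_norm_add_norm_sub' (a i) z
    rw [Metric.mem_ball, dist_eq_norm] at hx
    simp only [Set.mem_ofPred_eq, not_not] at hi
    linarith

lemma hasProdLocallyUniformly_weierstrassFactor (ha₀ : ∀ i, a i ≠ 0)
    (ha : Summable fun i => (‖a i‖ ^ 3)⁻¹) :
    HasProdLocallyUniformly (fun i => weierstrassFactor (a i))
      (fun z => ∏' i, weierstrassFactor (a i) z) := by
  refine hasProdLocallyUniformly_of_forall_compact fun K hK => ?_
  obtain ⟨R, hR⟩ := hK.isBounded.exists_norm_le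
  have h := Summable.hasProdUniformlyOn_one_add (f := fun i z => weierstrassFactor (a i) z - 1)
    hK (ha.mul_left (2 * R ^ 3)) ?_
    fun i => ((differentiable_weierstrassFactor _).sub_const 1).continuous.continuousOn
  · simpa only [add_sub_cancel] using h
  filter_upwards [eventually_cofinite_le_norm ha₀ ha (2 * R)] with i hi z hz
  have hzR := hR z hz
  calc ‖weierstrassFactor (a i) z - 1‖ ≤ 2 * ‖z‖ ^ 3 / ‖a i‖ ^ 3 :=
        norm_weierstrassFactor_sub_one_le (by linarith)
    _ ≤ 2 * R ^ 3 * (‖a i‖ ^ 3)⁻¹ := by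
        rw [div_eq_mul_inv]
        gcongr

lemma differentiable_tprod_weierstrassFactor (ha₀ : ∀ i, a i ≠ 0)
    (ha : Summable fun i => (‖a i‖ ^ 3)⁻¹) :
    Differentiable ℂ fun z => ∏' i, weierstrassFactor (a i) z := by
  rw [← differentiableOn_univ]
  have h := (hasProdLocallyUniformly_weierstrassFactor ha₀ ha).hasProdLocallyUniformlyOn
    (s := Set.univ)
  exact h.differentiableOn (.of_forall fun s => DifferentiableOn.fun_finsetProd fun i _ =>
      (differentiable_weierstrassFactor _).differentiableOn) isOpen_univ

lemma tprod_weierstrassFactor_ne_zero (ha₀ : ∀ i, a i ≠ 0)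
    (ha : Summable fun i => (‖a i‖ ^ 3)⁻¹) {z : ℂ} (hz : ∀ i, z ≠ a i) :
    ∏' i, weierstrassFactor (a i) z ≠ 0 := by
  have h := tprod_one_add_ne_zero_of_summable (f := fun i => weierstrassFactor (a i) z - 1)
    (fun i => by simpa only [add_sub_cancel] using weierstrassFactor_ne_zero (ha₀ i) (hz i)) ?_
  · simpa only [add_sub_cancel] using h
  refine Summable.of_norm_bounded_eventually (ha.mul_left (2 * ‖z‖ ^ 3)) ?_
  filter_upwards [eventually_cofinite_le_norm ha₀ ha (2 * ‖z‖)] with i hi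
  rw [norm_norm, ← div_eq_mul_inv]
  exact norm_weierstrassFactor_sub_one_le hi

lemma hasSumLocallyUniformly_weierstrassZetaTerm (ha₀ : ∀ i, a i ≠ 0)
    (ha : Summable fun i => (‖a i‖ ^ 3)⁻¹) :
    HasSumLocallyUniformly (fun i => weierstrassZetaTerm (a i))
      (fun z => ∑' i, weierstrassZetaTerm (a i) z) := by
  refine hasSumLocallyUniformly_of_forall_compact fun K hK => ?_
  obtain ⟨R, hR⟩ := hK.isBounded.exists_norm_le
  refine HasSumUniformlyOn.of_norm_le_summable_eventually (ha.mul_left (2 * R ^ 2)) ?_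
  filter_upwards [eventually_cofinite_le_norm ha₀ ha (2 * R)] with i hi z hz
  have hzR := hR z hz
  calc ‖weierstrassZetaTerm (a i) z‖ ≤ 2 * ‖z‖ ^ 2 / ‖a i‖ ^ 3 :=
        norm_weierstrassZetaTerm_le (ha₀ i) (by linarith)
    _ ≤ 2 * R ^ 2 * (‖a i‖ ^ 3)⁻¹ := by
        rw [div_eq_mul_inv]
        gcongr

lemma logDeriv_mul_tprod_weierstrassFactor (ha₀ : ∀ i, a i ≠ 0)
    (ha : Summable fun i => (‖a i‖ ^ 3)⁻¹) {z : ℂ} (hz₀ : z ≠ 0) (hz : ∀ i, z ≠ a i) :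
    logDeriv (fun x => x * ∏' i, weierstrassFactor (a i) x) z =
      1 / z + ∑' i, weierstrassZetaTerm (a i) z := by
  have hlog i : logDeriv (weierstrassFactor (a i)) z = weierstrassZetaTerm (a i) z :=
    logDeriv_weierstrassFactor (ha₀ i) (hz i)
  have hprod := logDeriv_tprod_eq_tsum isOpen_univ (Set.mem_univ z)
    (fun i => weierstrassFactor_ne_zero (ha₀ i) (hz i))
    (fun i => (differentiable_weierstrassFactor _).differentiableOn)
    (by simpa only [hlog] using
      ((hasSumLocallyUniformly_weierstrassZetaTerm ha₀ ha).hasSum (x := z)).summable)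
    ((hasProdLocallyUniformly_weierstrassFactor ha₀ ha).multipliableLocallyUniformly
      |>.multipliableLocallyUniformlyOn)
    (tprod_weierstrassFactor_ne_zero ha₀ ha hz)
  rw [logDeriv_mul (f := fun x => x) z hz₀ (tprod_weierstrassFactor_ne_zero ha₀ ha hz)
    differentiableAt_id (differentiable_tprod_weierstrassFactor ha₀ ha z), logDeriv_id', hprod,
    tsum_congr hlog]

lemma hasDerivAt_tsum_weierstrassZetaTerm (ha₀ : ∀ i, a i ≠ 0)
    (ha : Summable fun i => (‖a i‖ ^ 3)⁻¹) {z : ℂ} (hz : ∀ i, z ≠ a i) :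
    HasDerivAt (fun x => ∑' i, weierstrassZetaTerm (a i) x)
      (-∑' i, (1 / (z - a i) ^ 2 - 1 / a i ^ 2)) z := by
  set U := interior {x | ∀ i, x ≠ a i}
  have hU : IsOpen U := isOpen_interior
  have hzU : z ∈ U := mem_interior_iff_mem_nhds.mpr (eventually_nhds_forall_ne ha₀ ha hz)
  have hZ := (hasSumLocallyUniformly_weierstrassZetaTerm ha₀ ha).hasSumLocallyUniformlyOn (s := U)
  have hterm i : DifferentiableOn ℂ (weierstrassZetaTerm (a i)) U := fun x hx =>
    (hasDerivAt_weierstrassZetaTerm (interior_subset hx i)).differentiableAt.differentiableWithinAt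
  have hZdiff := (hZ.differentiableOn
    (.of_forall fun s => DifferentiableOn.fun_sum fun i _ => hterm i) hU).differentiableAt
      (hU.mem_nhds hzU)
  have hZderiv := hZ.hasSum_deriv hterm hU hzU
  simp only [fun i => (hasDerivAt_weierstrassZetaTerm (hz i)).deriv] at hZderiv
  rw [← tsum_neg, hZderiv.tsum_eq]
  exact hZdiff.hasDerivAt

theorem hasDerivAt_logDeriv_mul_tprod_weierstrassFactor (ha₀ : ∀ i, a i ≠ 0)
    (ha : Summable fun i => (‖a i‖ ^ 3)⁻¹) {z : ℂ} (hz₀ : z ≠ 0) (hz : ∀ i, z ≠ a i) :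
    HasDerivAt (logDeriv fun x => x * ∏' i, weierstrassFactor (a i) x)
      (-(1 / z ^ 2 + ∑' i, (1 / (z - a i) ^ 2 - 1 / a i ^ 2))) z := by
  have heq : (logDeriv fun x => x * ∏' i, weierstrassFactor (a i) x) =ᶠ[𝓝 z]
      fun x => 1 / x + ∑' i, weierstrassZetaTerm (a i) x := by
    filter_upwards [eventually_ne_nhds hz₀, eventually_nhds_forall_ne ha₀ ha hz] with x hx₀ hx
    exact logDeriv_mul_tprod_weierstrassFactor ha₀ ha hx₀ hx
  have hinv : HasDerivAt (fun x : ℂ => 1 / x) (-(1 / z ^ 2)) z := by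
    simpa only [one_div] using hasDerivAt_inv hz₀
  rw [neg_add]
  exact (hinv.fun_add (hasDerivAt_tsum_weierstrassZetaTerm ha₀ ha hz)).congr_of_eventuallyEq heq

end WeierstrassProduct

lemma linearIndependent_pair_of_im_div_ne_zero {ω₁ ω₂ : ℂ} (hω : (ω₂ / ω₁).im ≠ 0) :
    LinearIndependent ℝ ![ω₁, ω₂] := by
  have hω₁ : ω₁ ≠ 0 := by
    rintro rfl
    simp at hω
  refine LinearIndependent.pair_iff.mpr fun s t hst => ?_
  rw [real_smul, real_smul] at hst
  have h : (s : ℂ) + t * (ω₂ / ω₁) = 0 := by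
    field_simp
    linear_combination hst
  have ht : t = 0 := by simpa [hω] using congrArg im h
  subst ht
  simpa using h

lemma summable_inv_norm_pow_three_lat {ω₁ ω₂ : ℂ} (hω : (ω₂ / ω₁).im ≠ 0) :
    Summable fun w : {w : ℂ // w ∈ lat ω₁ ω₂ ∧ w ≠ 0} => (‖(w : ℂ)‖ ^ 3)⁻¹ := by
  let L : PeriodPair := ⟨ω₁, ω₂, linearIndependent_pair_of_im_div_ne_zero hω⟩
  have hL : ∀ w ∈ lat ω₁ ω₂, w ∈ L.lattice := by
    rintro _ ⟨m, n, rfl⟩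
    exact PeriodPair.mem_lattice.mpr ⟨m, n, rfl⟩
  have h := ZLattice.summable_norm_rpow L.lattice (-3) (by rw [L.finrank_lattice]; norm_num)
  refine (h.comp_injective (i := fun w : {w : ℂ // w ∈ lat ω₁ ω₂ ∧ w ≠ 0} =>
    (⟨w, hL w w.2.1⟩ : L.lattice)) fun v w hvw => Subtype.ext (Subtype.mk.inj hvw)).congr
    fun w => ?_
  simp

/-- **`℘ = −(log σ)''` away from the lattice.**
For `z ∉ Λ` the logarithmic derivative `ζ = σ'/σ` is complex-differentiable at `z`
and `℘(z) = −ζ'(z)`. -/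
theorem wp_eq_neg_deriv_wzeta (ω₁ ω₂ : ℂ) (hω : (ω₂ / ω₁).im ≠ 0)
    (z : ℂ) (hz : z ∉ lat ω₁ ω₂) :
    DifferentiableAt ℂ (wzeta ω₁ ω₂) z ∧
    wp ω₁ ω₂ z = -deriv (wzeta ω₁ ω₂) z := by
  have hz₀ : z ≠ 0 := fun h => hz ⟨0, 0, by simp [h]⟩
  have hd := hasDerivAt_logDeriv_mul_tprod_weierstrassFactor (a := Subtype.val)
    (fun w => w.2.2) (summable_inv_norm_pow_three_lat hω) hz₀ fun w h => hz (h ▸ w.2.1)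
  change HasDerivAt (wzeta ω₁ ω₂) (-wp ω₁ ω₂ z) z at hd
  exact ⟨hd.differentiableAt, by rw [hd.deriv, neg_neg]⟩
end
end

section
/- Let τ ∈ ℂ with τ ∉ ℝ, and let f : ℂ → ℂ be an entire (everywhere complex-differentiable) function with f(z) ≠ 0 for all z. Suppose there exist α₁, β₁, α₂, β₂ ∈ ℂ such that f(z+1) = exp(α₁·z + β₁)·f(z) and f(z+τ) = exp(α₂·z + β₂)·f(z) for all z ∈ ℂ. Then there exist A, B, C ∈ ℂ (necessarily C ≠ 0) with f(z) = C·exp(A·z + B·z²) for all z ∈ ℂ. (Classification of 'trivial theta functions': a nonvanishing entire function that is doubly quasi-periodic with exponential-of-linear multipliers is the exponential of a quadratic polynomial.) -/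
open Complex

private lemma quasi_logderiv (f : ℂ → ℂ) (hf : Differentiable ℂ f) (hf0 : ∀ z, f z ≠ 0)
    (c α β : ℂ) (h : ∀ z, f (z + c) = Complex.exp (α * z + β) * f z) :
    ∀ z, deriv f (z + c) / f (z + c) = α + deriv f z / f z := by
  intro z
  have hlin : HasDerivAt (fun w : ℂ => α * w + β) α z := by
    simpa using ((hasDerivAt_id z).const_mul α).add_const β
  have hrhs : HasDerivAt (fun w => Complex.exp (α * w + β) * f w)
      (Complex.exp (α * z + β) * α * f z + Complex.exp (α * z + β) * deriv f z) z :=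
    (hlin.cexp).mul (hf z).hasDerivAt
  have e1 : deriv (fun w => f (w + c)) z = deriv f (z + c) := deriv_comp_add_const ..
  have e2 : (fun w => f (w + c)) = fun w => Complex.exp (α * w + β) * f w := funext h
  have e3 : deriv f (z + c)
      = Complex.exp (α * z + β) * α * f z + Complex.exp (α * z + β) * deriv f z := by
    rw [← e1, e2, hrhs.deriv]
  rw [e3, h z]
  field_simp [hf0 z, Complex.exp_ne_zero]

/-- **Classification of trivial theta functions.**
Let `τ ∉ ℝ` and let `f : ℂ → ℂ` be entire and nowhere vanishing. If `f` is doubly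
quasi-periodic with multipliers `exp(α₁z + β₁)` (period `1`) and `exp(α₂z + β₂)`
(period `τ`), then `f(z) = C·exp(Az + Bz²)` for some constants `A, B, C` with `C ≠ 0`. -/
theorem trivial_theta_classification (τ : ℂ) (hτ : τ.im ≠ 0)
    (f : ℂ → ℂ) (hf : Differentiable ℂ f) (hf0 : ∀ z, f z ≠ 0)
    (α₁ β₁ α₂ β₂ : ℂ)
    (h1 : ∀ z, f (z + 1) = Complex.exp (α₁ * z + β₁) * f z)
    (h2 : ∀ z, f (z + τ) = Complex.exp (α₂ * z + β₂) * f z) :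
    ∃ A B C : ℂ, C ≠ 0 ∧ ∀ z, f z = C * Complex.exp (A * z + B * z ^ 2) := by
  -- the logarithmic derivative
  set L : ℂ → ℂ := fun z => deriv f z / f z with hLdef
  have hdf : Differentiable ℂ (deriv f) := by
    have h1 := (analyticOnNhd_univ_iff_differentiable.mpr hf).deriv
    exact fun z => (h1 z trivial).differentiableAt
  have hL : Differentiable ℂ L := hdf.div hf hf0
  have hL1 : ∀ z, L (z + 1) = α₁ + L z := quasi_logderiv f hf hf0 1 α₁ β₁ h1
  have hLτ : ∀ z, L (z + τ) = α₂ + L z := quasi_logderiv f hf hf0 τ α₂ β₂ h2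
  -- deriv L is doubly periodic
  have hper : ∀ c α, (∀ z, L (z + c) = α + L z) → ∀ z, deriv L (z + c) = deriv L z := by
    intro c α h z
    have e1 : deriv (fun w => L (w + c)) z = deriv L (z + c) := deriv_comp_add_const ..
    have e2 : (fun w => L (w + c)) = fun w => α + L w := funext h
    rw [← e1, e2, deriv_const_add]
  have P1 : Function.Periodic (deriv L) 1 := fun z => hper 1 α₁ hL1 z
  have Pτ : Function.Periodic (deriv L) τ := fun z => hper τ α₂ hLτ z
  have hdL : Differentiable ℂ (deriv L) := by
    have h1 := (analyticOnNhd_univ_iff_differentiable.mpr hL).deriv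
    exact fun z => (h1 z trivial).differentiableAt
  -- boundedness via the fundamental domain
  set K : Set ℂ := (fun p : ℝ × ℝ => (p.1 : ℂ) + (p.2 : ℂ) * τ) ''
      (Set.Icc (0:ℝ) 1 ×ˢ Set.Icc (0:ℝ) 1) with hKdef
  have hKc : IsCompact K :=
    (isCompact_Icc.prod isCompact_Icc).image (by continuity)
  have hrange : Set.range (deriv L) ⊆ deriv L '' K := by
    rintro - ⟨z, rfl⟩
    set y : ℝ := z.im / τ.im with hy
    set x : ℝ := z.re - y * τ.re with hx
    have hz : z = (x : ℂ) + (y : ℂ) * τ := by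
      apply Complex.ext <;> simp [hx, hy] <;> field_simp
    set w : ℂ := (↑(Int.fract x) : ℂ) + (↑(Int.fract y) : ℂ) * τ with hw
    have hwK : w ∈ K := ⟨(Int.fract x, Int.fract y),
      ⟨⟨Int.fract_nonneg x, le_of_lt (Int.fract_lt_one x)⟩, ⟨Int.fract_nonneg y, le_of_lt (Int.fract_lt_one y)⟩⟩, rfl⟩
    refine ⟨w, hwK, ?_⟩
    have e1 : z = w + (⌊y⌋ : ℤ) * τ + (⌊x⌋ : ℤ) * (1 : ℂ) := by
      rw [hz, hw]
      have fxr : Int.fract x = x - (⌊x⌋ : ℝ) := rfl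
      have fyr : Int.fract y = y - (⌊y⌋ : ℝ) := rfl
      have fx : ((Int.fract x : ℝ) : ℂ) = (x : ℂ) - ((⌊x⌋ : ℤ) : ℂ) := by rw [fxr]; push_cast; ring
      have fy : ((Int.fract y : ℝ) : ℂ) = (y : ℂ) - ((⌊y⌋ : ℤ) : ℂ) := by rw [fyr]; push_cast; ring
      rw [fx, fy]; ring
    calc deriv L w = deriv L (w + (⌊y⌋:ℤ) * τ) := ((Pτ.int_mul ⌊y⌋) w).symm
      _ = deriv L (w + (⌊y⌋:ℤ) * τ + (⌊x⌋:ℤ) * (1:ℂ)) := ((P1.int_mul ⌊x⌋) _).symm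
      _ = deriv L z := by rw [← e1]
  have hbd : Bornology.IsBounded (Set.range (deriv L)) :=
    ((hKc.image hdL.continuous).isBounded).subset hrange
  -- Liouville: deriv L is constant
  have hk : ∀ z, deriv L z = deriv L 0 := fun z =>
    hdL.apply_eq_apply_of_bounded hbd z 0
  set k : ℂ := deriv L 0 with hkdef
  -- hence L is affine
  have hM : ∀ z, L z = k * z + L 0 := by
    intro z
    have hMd : Differentiable ℂ (fun z => L z - k * z) :=
      hL.sub (differentiable_id.const_mul k)
    have hM0 : ∀ z, deriv (fun z => L z - k * z) z = 0 := by
      intro z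
      have h' : HasDerivAt (fun z => L z - k * z) (deriv L z - k) z :=
        (hL z).hasDerivAt.sub (by simpa using (hasDerivAt_id z).const_mul k)
      rw [h'.deriv, hk z]; simp [hkdef]
    have := is_const_of_deriv_eq_zero hMd hM0 z 0
    simp only [mul_zero, sub_zero] at this
    linear_combination this
  have hkα : k = α₁ := by
    have := hL1 0
    simp only [zero_add] at this
    rw [hM 1, hM 0] at this
    simp at this
    linear_combination this
  -- integrate: f z = f 0 * exp (L 0 * z + (α₁/2) * z²)
  refine ⟨L 0, α₁ / 2, f 0, hf0 0, ?_⟩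
  set g : ℂ → ℂ := fun z => L 0 * z + α₁ / 2 * z ^ 2 with hgdef
  have hgd : ∀ z, HasDerivAt g (α₁ * z + L 0) z := by
    intro z
    have h1 : HasDerivAt (fun z : ℂ => L 0 * z) (L 0) z := by
      simpa using (hasDerivAt_id z).const_mul (L 0)
    have h2 : HasDerivAt (fun z : ℂ => α₁ / 2 * z ^ 2) (α₁ / 2 * (2 * z)) z := by
      simpa using ((hasDerivAt_pow 2 z).const_mul (α₁ / 2))
    have := h1.add h2
    exact this.congr_deriv (by ring)
  set u : ℂ → ℂ := fun z => f z * Complex.exp (-g z) with hudef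
  have hu : ∀ z, HasDerivAt u 0 z := by
    intro z
    have hgneg : HasDerivAt (fun z => -g z) (-(α₁ * z + L 0)) z := (hgd z).neg
    have h' : HasDerivAt u
        (deriv f z * Complex.exp (-g z) + f z * (Complex.exp (-g z) * -(α₁ * z + L 0))) z :=
      (hf z).hasDerivAt.mul hgneg.cexp
    have hLz : L z = α₁ * z + L 0 := by rw [hM z, hkα]
    have hdfz : deriv f z = L z * f z := by
      rw [hLdef]; field_simp
      rw [mul_div_assoc, div_self (hf0 z), mul_one]
    convert h' using 1
    rw [hdfz, hLz]; ring
  have huc : ∀ z, u z = u 0 :=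
    fun z => is_const_of_deriv_eq_zero (fun z => (hu z).differentiableAt)
      (fun z => (hu z).deriv) z 0
  intro z
  have h := huc z
  have hg0 : g 0 = 0 := by simp [hgdef]
  have hu0 : u 0 = f 0 := by simp [hudef, hg0]
  have hz : f z * Complex.exp (-g z) = f 0 := by rw [← hu0]; exact h
  have key : f z = f 0 * Complex.exp (g z) := by
    calc f z = f z * (Complex.exp (-g z) * Complex.exp (g z)) := by
          rw [← Complex.exp_add]; simp
      _ = f 0 * Complex.exp (g z) := by rw [← mul_assoc, hz]
  exact key
end
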